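/- Let I ⊂ ℝ be a nonempty open interval and let f : I → ℝ be one of the functions f(t) = cosh t, f(t) = e^t, or f(t) = sinh t (with I ⊂ (0,∞) in the last case). Then there exist no continuously differentiable function θ : I → ℝ and constants C₁, C₂ ∈ ℝ such that 6f′(t) = C₁ sin θ(t) − C₂ cos θ(t) and f(t)θ′(t) = C₁ cos θ(t) + C₂ sin θ(t) for all t ∈ I. -/

import Mathlib

/-!
Differentiating the first equation and substituting the second gives `6 f'' = f θ'²`, while
squaring and adding the two equations gives `(6 f')² + (f θ')² = C₁² + C₂²`. When `f'' = f`
these combine into the first integral `36 f'² + 6 f² = C₁² + C₂²`, whose derivative `84 f f'`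
must then vanish on `I`. For `cosh`, `exp` and `sinh` the product `f f'` vanishes at most at
`t = 0`, which a nonempty open interval cannot be confined to.
-/

open Real Set Filter Topology

theorem IsOpen.exists_mem_ne {X : Type*} [TopologicalSpace X] {U : Set X} (hU : IsOpen U)
    (hne : U.Nonempty) (a : X) [NeBot (𝓝[≠] a)] : ∃ x ∈ U, x ≠ a := by
  by_contra! h
  have hU_sub : U ⊆ interior {a} := interior_maximal h hU
  rw [interior_singleton, subset_empty_iff] at hU_sub
  exact hne.ne_empty hU_sub

section WarpedSystem

variable {I : Set ℝ} {f f' θ : ℝ → ℝ} {C₁ C₂ : ℝ}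

theorem six_mul_second_deriv_eq_of_system {f'' : ℝ → ℝ} (hI : IsOpen I)
    (hθ : DifferentiableOn ℝ θ I) (hf' : ∀ t ∈ I, HasDerivAt f' (f'' t) t)
    (h₁ : ∀ t ∈ I, 6 * f' t = C₁ * sin (θ t) - C₂ * cos (θ t))
    (h₂ : ∀ t ∈ I, f t * deriv θ t = C₁ * cos (θ t) + C₂ * sin (θ t)) {t : ℝ} (ht : t ∈ I) :
    6 * f'' t = f t * deriv θ t ^ 2 := by
  have hθt : HasDerivAt θ (deriv θ t) t :=
    (hθ.differentiableAt (hI.mem_nhds ht)).hasDerivAt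
  have hrhs : HasDerivAt (fun s => C₁ * sin (θ s) - C₂ * cos (θ s))
      (deriv θ t * (C₁ * cos (θ t) + C₂ * sin (θ t))) t :=
    ((hθt.sin.const_mul C₁).sub (hθt.cos.const_mul C₂)).congr_deriv (by ring)
  have hlhs : HasDerivAt (fun s => C₁ * sin (θ s) - C₂ * cos (θ s)) (6 * f'' t) t :=
    ((hf' t ht).const_mul 6).congr_of_eventuallyEq
      (eventually_of_mem (hI.mem_nhds ht) fun s hs => (h₁ s hs).symm)
  rw [hlhs.unique hrhs, ← h₂ t ht]
  ring

theorem sq_add_sq_eq_of_system {t : ℝ}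
    (h₁ : 6 * f' t = C₁ * sin (θ t) - C₂ * cos (θ t))
    (h₂ : f t * deriv θ t = C₁ * cos (θ t) + C₂ * sin (θ t)) :
    (6 * f' t) ^ 2 + (f t * deriv θ t) ^ 2 = C₁ ^ 2 + C₂ ^ 2 := by
  rw [h₁, h₂]
  linear_combination (C₁ ^ 2 + C₂ ^ 2) * sin_sq_add_cos_sq (θ t)

theorem first_integral_of_system (hI : IsOpen I) (hθ : DifferentiableOn ℝ θ I)
    (hf' : ∀ t ∈ I, HasDerivAt f' (f t) t)
    (h₁ : ∀ t ∈ I, 6 * f' t = C₁ * sin (θ t) - C₂ * cos (θ t))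
    (h₂ : ∀ t ∈ I, f t * deriv θ t = C₁ * cos (θ t) + C₂ * sin (θ t)) {t : ℝ} (ht : t ∈ I) :
    36 * f' t ^ 2 + 6 * f t ^ 2 = C₁ ^ 2 + C₂ ^ 2 := by
  have h₀ := six_mul_second_deriv_eq_of_system hI hθ hf' h₁ h₂ ht
  linear_combination sq_add_sq_eq_of_system (h₁ t ht) (h₂ t ht) + f t * h₀

theorem mul_eq_zero_of_system (hI : IsOpen I) (hθ : DifferentiableOn ℝ θ I)
    (hf : ∀ t ∈ I, HasDerivAt f (f' t) t) (hf' : ∀ t ∈ I, HasDerivAt f' (f t) t)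
    (h₁ : ∀ t ∈ I, 6 * f' t = C₁ * sin (θ t) - C₂ * cos (θ t))
    (h₂ : ∀ t ∈ I, f t * deriv θ t = C₁ * cos (θ t) + C₂ * sin (θ t)) {t : ℝ} (ht : t ∈ I) :
    f t * f' t = 0 := by
  have henergy : HasDerivAt (fun s => 36 * f' s ^ 2 + 6 * f s ^ 2) (84 * (f t * f' t)) t :=
    ((((hf' t ht).pow 2).const_mul 36).add (((hf t ht).pow 2).const_mul 6)).congr_deriv
      (by push_cast; ring)
  have hconst : HasDerivAt (fun s => 36 * f' s ^ 2 + 6 * f s ^ 2) 0 t :=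
    (hasDerivAt_const t (C₁ ^ 2 + C₂ ^ 2)).congr_of_eventuallyEq
      (eventually_of_mem (hI.mem_nhds ht) fun s hs => first_integral_of_system hI hθ hf' h₁ h₂ hs)
  simpa using henergy.unique hconst

end WarpedSystem

theorem no_solution_of_warped_X₂X₃_einstein_system_general (I : Set ℝ)
    (hI_open : IsOpen I) (hI_ne : I.Nonempty)
    (f : ℝ → ℝ)
    (hf : f = Real.cosh ∨ f = Real.exp ∨ (f = Real.sinh ∧ I ⊆ Set.Ioi 0)) :
    ¬ ∃ (θ : ℝ → ℝ) (C₁ C₂ : ℝ), ContDiffOn ℝ 1 θ I ∧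
        (∀ t ∈ I, 6 * deriv f t = C₁ * Real.sin (θ t) - C₂ * Real.cos (θ t)) ∧
        (∀ t ∈ I, f t * deriv θ t = C₁ * Real.cos (θ t) + C₂ * Real.sin (θ t)) := by
  rintro ⟨θ, C₁, C₂, hθ, h₁, h₂⟩
  have hθd := hθ.differentiableOn one_ne_zero
  obtain ⟨t, ht, ht₀⟩ := hI_open.exists_mem_ne hI_ne 0
  rcases hf with rfl | rfl | ⟨rfl, -⟩
  · rw [Real.deriv_cosh] at h₁
    have hprod := mul_eq_zero_of_system hI_open hθd (fun t _ => hasDerivAt_cosh t)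
      (fun t _ => hasDerivAt_sinh t) h₁ h₂ ht
    simp [(cosh_pos t).ne', ht₀] at hprod
  · rw [Real.deriv_exp] at h₁
    have hprod := mul_eq_zero_of_system hI_open hθd (fun t _ => hasDerivAt_exp t)
      (fun t _ => hasDerivAt_exp t) h₁ h₂ ht
    simp [(exp_pos t).ne'] at hprod
  · rw [Real.deriv_sinh] at h₁
    have hprod := mul_eq_zero_of_system hI_open hθd (fun t _ => hasDerivAt_sinh t)
      (fun t _ => hasDerivAt_cosh t) h₁ h₂ ht
    simp [(cosh_pos t).ne', ht₀] at hprod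

/-- The analytic core of the proof of Proposition 4.6.  Let `I ⊆ ℝ` be a
nonempty open interval and let `f : I → ℝ` be one of the functions
`f(t) = cosh t`, `f(t) = e^t`, or `f(t) = sinh t` (with `I ⊆ (0,∞)` in the
last case).  Then there exist no continuously differentiable function
`θ : I → ℝ` and constants `C₁, C₂ ∈ ℝ` such that
`6f′(t) = C₁ sin θ(t) − C₂ cos θ(t)` and
`f(t)θ′(t) = C₁ cos θ(t) + C₂ sin θ(t)` for all `t ∈ I`. -/
theorem no_solution_of_warped_X₂X₃_einstein_system (I : Set ℝ)
    (hI_open : IsOpen I) (hI_ne : I.Nonempty) (hI_conn : I.OrdConnected)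
    (f : ℝ → ℝ)
    (hf : f = Real.cosh ∨ f = Real.exp ∨ (f = Real.sinh ∧ I ⊆ Set.Ioi 0)) :
    ¬ ∃ (θ : ℝ → ℝ) (C₁ C₂ : ℝ), ContDiffOn ℝ 1 θ I ∧
        (∀ t ∈ I, 6 * deriv f t = C₁ * Real.sin (θ t) - C₂ * Real.cos (θ t)) ∧
        (∀ t ∈ I, f t * deriv θ t = C₁ * Real.cos (θ t) + C₂ * Real.sin (θ t)) :=
  no_solution_of_warped_X₂X₃_einstein_system_general I hI_open hI_ne f hf
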